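/- Let Q, A, C, σ, β be types, sstep : Q → C → σ → A × σ, vstep : Q → A → β → Option β, s₀ : σ, v₀ : β. Suppose there is a relation R : β → σ → Prop such that (RejComplete-End) for all q, a, v, v', if vstep q a v = some v' then there exists s' : σ with R v' s'; (RejComplete-Step) for all q, a, v, v', s', if vstep q a v = some v' and R v' s' then there exist s : σ and c : C with sstep q c s = (a, s') and R v s; and (RejComplete-Init) for every s : σ, R v₀ s holds if and only if s = s₀. Then the validator is rejection-complete: for every trace t : List (Q × A), if there exists v' such that the validator consumes t from v₀ to v', then there exists s' such that the server produces t from s₀ to s'. -/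
import Mathlib


/-- The server produces trace `t` from state `s` to state `s'`. -/
inductive Produces {Q A C σ : Type*} (sstep : Q → C → σ → A × σ) : σ → List (Q × A) → σ → Prop
  | nil (s : σ) : Produces sstep s [] s
  | snoc {s s₁ s₂ : σ} {t : List (Q × A)} {q : Q} {a : A} (c : C)
      (h : Produces sstep s t s₁) (hs : sstep q c s₁ = (a, s₂)) :
      Produces sstep s (t ++ [(q, a)]) s₂

/-- The validator consumes trace `t` from state `v` to state `v'`. -/
inductive Consumes {Q A β : Type*} (vstep : Q → A → β → Option β) : β → List (Q × A) → β → Prop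
  | nil (v : β) : Consumes vstep v [] v
  | snoc {v v₁ v₂ : β} {t : List (Q × A)} {q : Q} {a : A}
      (h : Consumes vstep v t v₁) (hv : vstep q a v₁ = some v₂) :
      Consumes vstep v (t ++ [(q, a)]) v₂


theorem rejection_completeness {Q A C σ β : Type*}
    (sstep : Q → C → σ → A × σ) (vstep : Q → A → β → Option β)
    (s₀ : σ) (v₀ : β) (R : β → σ → Prop)
    (hend : ∀ (q : Q) (a : A) (v v' : β),
      vstep q a v = some v' → ∃ s' : σ, R v' s')
    (hstep : ∀ (q : Q) (a : A) (v v' : β) (s' : σ),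
      vstep q a v = some v' → R v' s' →
      ∃ (s : σ) (c : C), sstep q c s = (a, s') ∧ R v s)
    (hinit : ∀ s : σ, R v₀ s ↔ s = s₀) :
    ∀ t : List (Q × A),
      (∃ v', Consumes vstep v₀ t v') → ∃ s', Produces sstep s₀ t s' := by
  have key : ∀ (t : List (Q × A)) (v' : β), Consumes vstep v₀ t v' →
      ∀ s', R v' s' → Produces sstep s₀ t s' := by
    intro t v' hc
    induction hc with
    | nil => intro s' hR; rw [(hinit s').mp hR]; exact Produces.nil s₀
    | snoc h hv ih =>
      intro s' hR
      obtain ⟨s, c, hs, hRs⟩ := hstep _ _ _ _ _ hv hR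
      exact Produces.snoc c (ih s hRs) hs
  rintro t ⟨v', hc⟩
  cases hc with
  | nil => exact ⟨s₀, Produces.nil s₀⟩
  | snoc h hv =>
    obtain ⟨s', hR⟩ := hend _ _ _ _ hv
    exact ⟨s', key _ _ (Consumes.snoc h hv) s' hR⟩
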